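/- arXiv:2107.12453 — 6 statements merged into one kernel-verified Lean document; each statement's English description precedes it below -/
import Mathlib

section
/- Let Q(x) ∈ Z[x] be a monic polynomial of degree d with all roots real and contained in [-2√2, 2√2], and define R(x) = x^d · Q(x + 2/x). Then R(x) is a monic integer polynomial of degree 2d, all of whose complex roots α satisfy |α| = √2, and R(1) = Q(3). -/
/-!
Writing `w = z + 2 / z`, we have `R(z) = z ^ d * Q(w)` and `z ^ 2 - w z + 2 = 0`. Since `R(0) = 2 ^ d`,
every root `z` of `R` is nonzero, so `w` is a root of `Q`: a real number with `w ^ 2 ≤ 8`. The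
quadratic then has nonpositive discriminant, so either `z` and `conj z` are its two roots and
`|z| ^ 2 = z * conj z = 2`, or `z = w / 2` is a double root and `z ^ 2 = 2`.
Only the term `(x ^ 2 + 2) ^ d` reaches degree `2 d`, which gives monicity and the degree, and
`R(1) = Q(1 + 2)`.
-/

open Polynomial

section ClearedSubst

variable {R : Type*} [CommRing R]

/-- `x ^ d * Q (x + c / x)` with the denominators cleared; the paper's `R` is `clearedSubst Q 2 d`. -/
noncomputable def clearedSubst (Q : R[X]) (c : R) (d : ℕ) : R[X] :=
  ∑ i ∈ Finset.range (d + 1), C (Q.coeff i) * X ^ (d - i) * (X ^ 2 + C c) ^ i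

lemma natDegree_clearedSubst_term_le [Nontrivial R] (a c : R) {d i : ℕ} (hi : i ≤ d) :
    (C a * X ^ (d - i) * (X ^ 2 + C c) ^ i).natDegree ≤ d + i := by
  calc _ ≤ (C a * X ^ (d - i)).natDegree + ((X ^ 2 + C c) ^ i).natDegree := natDegree_mul_le
    _ ≤ (d - i) + 2 * i := by
      gcongr
      · exact natDegree_C_mul_X_pow_le a (d - i)
      · rw [(monic_X_pow_add_C c two_ne_zero).natDegree_pow, natDegree_X_pow_add_C, mul_comm]
    _ = d + i := by omega

lemma natDegree_clearedSubst_le [Nontrivial R] (Q : R[X]) (c : R) (d : ℕ) :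
    (clearedSubst Q c d).natDegree ≤ 2 * d :=
  natDegree_sum_le_of_forall_le _ _ fun i hi =>
    (natDegree_clearedSubst_term_le _ c (Nat.lt_succ_iff.mp (Finset.mem_range.mp hi))).trans
      (by have := Finset.mem_range.mp hi; omega)

lemma coeff_clearedSubst_two_mul [Nontrivial R] {Q : R[X]} (hQ : Q.Monic) (c : R) :
    (clearedSubst Q c Q.natDegree).coeff (2 * Q.natDegree) = 1 := by
  have hlow : ∀ i ∈ Finset.range Q.natDegree,
      (C (Q.coeff i) * X ^ (Q.natDegree - i) * (X ^ 2 + C c) ^ i).coeff (2 * Q.natDegree) = 0 :=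
    fun i hi => coeff_eq_zero_of_natDegree_lt <|
      (natDegree_clearedSubst_term_le _ c (Finset.mem_range.mp hi).le).trans_lt
        (by have := Finset.mem_range.mp hi; omega)
  have htop : ((X ^ 2 + C c) ^ Q.natDegree).coeff (2 * Q.natDegree) = 1 := by
    have hmon := monic_X_pow_add_C c two_ne_zero
    have := (hmon.pow Q.natDegree).coeff_natDegree
    rwa [hmon.natDegree_pow, natDegree_X_pow_add_C, mul_comm] at this
  rw [clearedSubst, finsetSum_coeff, Finset.sum_range_succ, Finset.sum_eq_zero hlow,
    hQ.coeff_natDegree]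
  simpa using htop

lemma monic_clearedSubst [Nontrivial R] {Q : R[X]} (hQ : Q.Monic) (c : R) :
    (clearedSubst Q c Q.natDegree).Monic :=
  monic_of_natDegree_le_of_coeff_eq_one _ (natDegree_clearedSubst_le Q c _)
    (coeff_clearedSubst_two_mul hQ c)

lemma natDegree_clearedSubst [Nontrivial R] {Q : R[X]} (hQ : Q.Monic) (c : R) :
    (clearedSubst Q c Q.natDegree).natDegree = 2 * Q.natDegree :=
  natDegree_eq_of_le_of_coeff_ne_zero (natDegree_clearedSubst_le Q c _)
    (by rw [coeff_clearedSubst_two_mul hQ c]; exact one_ne_zero)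

lemma aeval_clearedSubst {A : Type*} [CommRing A] [Algebra R A] {Q : R[X]} {c : R} {d : ℕ}
    (hd : Q.natDegree ≤ d) {z w : A} (hzw : z * w = z ^ 2 + algebraMap R A c) :
    aeval z (clearedSubst Q c d) = z ^ d * aeval w Q := by
  rw [clearedSubst, map_sum, aeval_eq_sum_range' (Nat.lt_succ_of_le hd), Finset.mul_sum]
  refine Finset.sum_congr rfl fun i hi => ?_
  have hid : i ≤ d := Nat.lt_succ_iff.mp (Finset.mem_range.mp hi)
  simp only [map_mul, map_pow, map_add, aeval_C, aeval_X, ← hzw, Algebra.smul_def]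
  rw [← Nat.sub_add_cancel hid, Nat.add_sub_cancel]
  ring

lemma eval_one_clearedSubst {Q : R[X]} {c : R} {d : ℕ} (hd : Q.natDegree ≤ d) :
    (clearedSubst Q c d).eval 1 = Q.eval (1 + c) := by
  simpa [coe_aeval_eq_eval] using aeval_clearedSubst (A := R) hd (z := 1) (w := 1 + c) (by simp)

lemma eval_zero_clearedSubst (Q : R[X]) (c : R) (d : ℕ) :
    (clearedSubst Q c d).eval 0 = Q.coeff d * c ^ d := by
  rw [clearedSubst, eval_finsetSum, Finset.sum_range_succ, Finset.sum_eq_zero]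
  · simp
  · intro i hi
    simp [zero_pow (Nat.sub_ne_zero_of_lt (Finset.mem_range.mp hi))]

end ClearedSubst

lemma Complex.norm_eq_sqrt_of_sq_add_eq_mul {z : ℂ} {w c : ℝ} (hw : w ^ 2 ≤ 4 * c)
    (hz : z ^ 2 + c = w * z) : ‖z‖ = √c := by
  have hre : z.re ^ 2 - z.im ^ 2 + c = w * z.re := by
    simpa [sq] using congrArg Complex.re hz
  have him : (2 * z.re - w) * z.im = 0 := by
    have := congrArg Complex.im hz
    simp only [sq, add_im, mul_im, ofReal_im, add_zero, ofReal_re, zero_mul] at this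
    linear_combination this
  suffices Complex.normSq z = c by rw [Complex.norm_def, this]
  rw [Complex.normSq_apply]
  rcases mul_eq_zero.mp him with hx | hy
  · linear_combination z.re * hx - hre
  · -- a real root of a quadratic with discriminant `w ^ 2 - 4 c ≤ 0` is the double root `w / 2`
    have : (2 * z.re - w) ^ 2 = w ^ 2 - 4 * c := by rw [hy] at hre; linear_combination 4 * hre
    rw [hy]; nlinarith [sq_nonneg (2 * z.re - w)]

lemma norm_eq_sqrt_of_aeval_clearedSubst_eq_zero {Q : ℤ[X]} (hQ : Q.Monic) {c : ℤ} (hc : c ≠ 0)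
    (hroots : ∀ w : ℂ, aeval w Q = 0 → w.im = 0 ∧ w.re ^ 2 ≤ 4 * c) {z : ℂ}
    (hz : aeval z (clearedSubst Q c Q.natDegree) = 0) : ‖z‖ = √c := by
  have hz0 : z ≠ 0 := by
    rintro rfl
    rw [← map_zero (algebraMap ℤ ℂ), aeval_algebraMap_apply, coe_aeval_eq_eval,
      eval_zero_clearedSubst, hQ.coeff_natDegree] at hz
    simp [hc] at hz
  have hzw : z * (z + c / z) = z ^ 2 + algebraMap ℤ ℂ c := by field_simp; simp
  have hw : aeval (z + c / z) Q = 0 := by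
    simpa [aeval_clearedSubst le_rfl hzw, hz0] using hz
  obtain ⟨him, hbound⟩ := hroots _ hw
  refine Complex.norm_eq_sqrt_of_sq_add_eq_mul hbound ?_
  have hreal : z + c / z = ((z + c / z).re : ℂ) := Complex.ext (by simp) (by simp [him])
  rw [hreal] at hzw
  push_cast
  linear_combination -hzw

theorem stmt_1 (Q : Polynomial ℤ) (d : ℕ) (hmonic : Q.Monic) (hdeg : Q.natDegree = d)
    (hroots : ∀ z : ℂ, aeval z Q = 0 →
      z.im = 0 ∧ -(2 * Real.sqrt 2) ≤ z.re ∧ z.re ≤ 2 * Real.sqrt 2)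
    (R : Polynomial ℤ)
    (hR : R = ∑ i ∈ Finset.range (d + 1), C (Q.coeff i) * X ^ (d - i) * (X ^ 2 + 2) ^ i) :
    R.Monic ∧ R.natDegree = 2 * d ∧
      (∀ z : ℂ, aeval z R = 0 → ‖z‖ = Real.sqrt 2) ∧
      R.eval 1 = Q.eval 3 := by
  subst hdeg
  have hR : R = clearedSubst Q 2 Q.natDegree := by simp [hR, clearedSubst]
  subst hR
  have hroots_sq : ∀ w : ℂ, aeval w Q = 0 → w.im = 0 ∧ w.re ^ 2 ≤ 4 * (2 : ℤ) := by
    intro w hw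
    obtain ⟨him, hlow, hupp⟩ := hroots w hw
    refine ⟨him, (sq_le_sq' hlow hupp).trans_eq ?_⟩
    rw [mul_pow, Real.sq_sqrt zero_le_two]
    norm_num
  refine ⟨monic_clearedSubst hmonic 2, natDegree_clearedSubst hmonic 2, fun z hz => ?_, ?_⟩
  · exact_mod_cast norm_eq_sqrt_of_aeval_clearedSubst_eq_zero hmonic two_ne_zero hroots_sq hz
  · rw [eval_one_clearedSubst le_rfl]
    norm_num
end

section
/- For all n ≥ 0 and k ≥ 2, the rational functions g_{n,k}(x) := (x-1)^{-k} Σ_{j=0}^{k} C(k,j) f_{n+j}(x) satisfy the recurrence g_{n,k}(x) - (x-3) g_{n,k-1}(x) + 2 g_{n,k-2}(x) = 0. -/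
open Polynomial

/-- f 0 = 2, f 1 = X^2 - 4X + 1, f (n+2) = (X^2-4X+1) f (n+1) - X^2 f n. -/
noncomputable def madanF : ℕ → Polynomial ℤ
  | 0 => 2
  | 1 => X ^ 2 - 4 * X + 1
  | (n + 2) => (X ^ 2 - 4 * X + 1) * madanF (n + 1) - X ^ 2 * madanF n

/-- Σ_{j=0}^{k} C(k,j) f_{n+j}, the numerator of g_{n,k}. -/
noncomputable def gNum (n k : ℕ) : Polynomial ℤ :=
  ∑ j ∈ Finset.range (k + 1), (k.choose j : ℤ) • madanF (n + j)

/-- g_{n,k} as a rational function: (X-1)^{-k} Σ_{j=0}^{k} C(k,j) f_{n+j}. -/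
noncomputable def gRat (n k : ℕ) : RatFunc ℚ :=
  (algebraMap (Polynomial ℚ) (RatFunc ℚ) (X - 1)) ⁻¹ ^ k *
    algebraMap (Polynomial ℚ) (RatFunc ℚ) ((gNum n k).map (Int.castRingHom ℚ))

/-! With the shift operator `E u = u (· + 1)`, the numerator `∑ⱼ C(k, j) f (n + j)` of `g n k` is
`(1 + E)ᵏ f` evaluated at `n`. The recurrence of `f` says `E² = (x² - 4x + 1) E - x²`, so
`T = 1 + E` satisfies `T² = (x - 1)(x - 3) T - 2 (x - 1)²`; dividing by `(x - 1)ᵏ⁺²` gives the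
recurrence of `g`. -/

def binomialSum {M : Type*} [AddCommGroup M] (u : ℕ → M) (n k : ℕ) : M :=
  ∑ j ∈ Finset.range (k + 1), (k.choose j : ℤ) • u (n + j)

theorem binomialSum_succ {M : Type*} [AddCommGroup M] (u : ℕ → M) (n k : ℕ) :
    binomialSum u n (k + 1) = binomialSum u n k + binomialSum u (n + 1) k := by
  have tail : ∑ j ∈ Finset.range (k + 1), (k.choose (j + 1) : ℤ) • u (n + (j + 1)) + u n =
      binomialSum u n k := by
    rw [binomialSum, Finset.sum_range_succ, Nat.choose_succ_self, Nat.cast_zero, zero_smul,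
      add_zero, Finset.sum_range_succ' _ k]
    simp
  rw [binomialSum, Finset.sum_range_succ', ← tail, binomialSum]
  simp only [Nat.choose_succ_succ', Nat.cast_add, add_smul, Finset.sum_add_distrib,
    Nat.choose_zero_right, Nat.cast_one, one_smul, add_zero, add_comm 1, add_assoc]
  abel

section Recurrence

variable {R : Type*} [CommRing R] {u : ℕ → R} {a b : R}

theorem binomialSum_add_two_left (hu : ∀ n, u (n + 2) = a * u (n + 1) - b * u n) (n k : ℕ) :
    binomialSum u (n + 2) k = a * binomialSum u (n + 1) k - b * binomialSum u n k := by
  simp only [binomialSum, Finset.mul_sum, ← Finset.sum_sub_distrib, zsmul_eq_mul]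
  refine Finset.sum_congr rfl fun j _ => ?_
  rw [show n + 2 + j = n + j + 2 by ring, hu, show n + 1 + j = n + j + 1 by ring]
  ring

theorem binomialSum_add_two_right (hu : ∀ n, u (n + 2) = a * u (n + 1) - b * u n) (n k : ℕ) :
    binomialSum u n (k + 2) =
      (a + 2) * binomialSum u n (k + 1) - (a + b + 1) * binomialSum u n k := by
  rw [binomialSum_succ u n (k + 1), binomialSum_succ u n k, binomialSum_succ u (n + 1) k,
    binomialSum_add_two_left hu n k]
  ring

end Recurrence

theorem madanF_add_two (n : ℕ) :
    madanF (n + 2) = (X ^ 2 - 4 * X + 1) * madanF (n + 1) - X ^ 2 * madanF n := by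
  rw [madanF]

theorem gNum_add_two (n k : ℕ) :
    gNum n (k + 2) = (X - 1) * (X - 3) * gNum n (k + 1) - 2 * (X - 1) ^ 2 * gNum n k := by
  have hg : gNum = binomialSum madanF := rfl
  rw [hg, binomialSum_add_two_right madanF_add_two n k]
  ring

theorem inv_pow_mul_add_two {K : Type*} [Field K] {d p q : K} (hd : d ≠ 0) (N : ℕ → K) (k : ℕ)
    (hN : N (k + 2) = d * p * N (k + 1) - q * d ^ 2 * N k) :
    d⁻¹ ^ (k + 2) * N (k + 2) = p * (d⁻¹ ^ (k + 1) * N (k + 1)) - q * (d⁻¹ ^ k * N k) := by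
  have hdd : d⁻¹ * d = 1 := inv_mul_cancel₀ hd
  rw [hN]
  linear_combination (p * d⁻¹ ^ (k + 1) * N (k + 1) - q * d⁻¹ ^ k * N k * (d⁻¹ * d + 1)) * hdd

theorem stmt_6 : ∀ n k : ℕ,
    gRat n (k + 2) - (algebraMap (Polynomial ℚ) (RatFunc ℚ) X - 3) * gRat n (k + 1)
      + 2 * gRat n k = 0 := by
  intro n k
  have hd : algebraMap ℚ[X] (RatFunc ℚ) (X - 1) ≠ 0 :=
    RatFunc.algebraMap_ne_zero (X_sub_C_ne_zero 1)
  have key := inv_pow_mul_add_two hd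
    (fun k => algebraMap ℚ[X] (RatFunc ℚ) ((gNum n k).map (Int.castRingHom ℚ))) k
    (p := algebraMap ℚ[X] (RatFunc ℚ) X - 3) (q := 2) (by
      simp only [gNum_add_two, Polynomial.map_sub, Polynomial.map_mul, Polynomial.map_pow,
        Polynomial.map_X, Polynomial.map_one, Polynomial.map_ofNat, map_sub, map_mul, map_pow,
        map_one, map_ofNat])
  rw [gRat, gRat, gRat, key]
  ring
end

section
/- For all n ≥ 1 and k ≥ 0, the constant term of the polynomial g_{n,k}(x) equals (-2)^k. -/
open Polynomial

/-- At `x = 0` the recurrence reads `f (n+2) = f (n+1)`. -/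
lemma madanF_eval_zero_succ (n : ℕ) : (madanF (n + 1)).eval 0 = 1 := by
  induction n with
  | zero => simp [madanF]
  | succ n ih => simp [madanF, ih]

lemma gNum_eval_zero {n : ℕ} (hn : 1 ≤ n) (k : ℕ) : (gNum n k).eval 0 = 2 ^ k := by
  obtain ⟨m, rfl⟩ := Nat.exists_eq_add_of_le' hn
  have hterm (j : ℕ) : (madanF (m + 1 + j)).eval 0 = 1 := by
    rw [Nat.add_right_comm]
    exact madanF_eval_zero_succ _
  simp only [gNum, eval_finsetSum, eval_smul, hterm, smul_eq_mul, mul_one]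
  exact_mod_cast Nat.sum_range_choose k

lemma eval_zero_eq_of_X_sub_one_pow_mul_eq {R : Type*} [CommRing R] {k : ℕ} {g p : R[X]}
    (h : (X - 1) ^ k * g = p) : g.eval 0 = (-1) ^ k * p.eval 0 := by
  rw [← h, eval_mul, eval_pow, eval_sub, eval_X, eval_one, zero_sub, ← mul_assoc, ← mul_pow,
    neg_one_mul, neg_neg, one_pow, one_mul]

theorem stmt_8 : ∀ n k : ℕ, 1 ≤ n → ∀ g : Polynomial ℤ,
    (X - 1) ^ k * g = gNum n k → g.coeff 0 = (-2) ^ k := by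
  intro n k hn g hg
  rw [coeff_zero_eq_eval_zero, eval_zero_eq_of_X_sub_one_pow_mul_eq hg, gNum_eval_zero hn,
    ← mul_pow, neg_one_mul]
end

section
/- For all n ≥ 0 and k ≥ 0, g_{n,k}(x) ≡ x^{2n}(x+1)^k + 2^k (mod 2), i.e., the reduction of g_{n,k} modulo 2 as a polynomial over F_2 equals x^{2n}(x+1)^k + 2^k mod 2. -/
/-! Modulo 2 the recurrence reads `f (n+2) = (X^2+1) f (n+1) - X^2 f n` with roots `1` and `X^2`,
so `f n ≡ X^(2n) + 1`. Summing against binomial coefficients gives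
`g_{n,k} (X+1)^k ≡ X^(2n) (X^2+1)^k + 2^k = (X+1)^k (X^(2n) (X+1)^k + 2^k)`,
and `(X+1)^k` cancels in the domain `𝔽₂[X]`. -/

open Polynomial

theorem CharTwo.pow_mul_two_pow {R : Type*} [CommSemiring R] [CharP R 2] (a : R) (k : ℕ) :
    a ^ k * 2 ^ k = 2 ^ k := by
  rw [← mul_pow, CharTwo.two_eq_zero, mul_zero]

theorem Finset.sum_range_choose_smul_mul_pow_add_one {R : Type*} [CommSemiring R]
    (a b : R) (k : ℕ) :
    ∑ j ∈ Finset.range (k + 1), k.choose j • (a * b ^ j + 1) = a * (b + 1) ^ k + 2 ^ k := by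
  simp only [smul_add, Finset.sum_add_distrib, add_pow, Finset.mul_sum, one_pow, mul_one,
    nsmul_eq_mul, ← Nat.cast_sum, Nat.sum_range_choose, Nat.cast_pow, Nat.cast_ofNat]
  congr 1
  exact Finset.sum_congr rfl fun j _ => by ring

theorem map_X_sq_sub_four_mul_X_add_one :
    (X ^ 2 - 4 * X + 1 : ℤ[X]).map (Int.castRingHom (ZMod 2)) = X ^ 2 + 1 := by
  have h4 : (4 : (ZMod 2)[X]) = 0 := by
    rw [show (4 : (ZMod 2)[X]) = 2 * 2 by norm_num, CharTwo.two_eq_zero (R := (ZMod 2)[X]),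
      mul_zero]
  simp [h4]

theorem map_madanF_zmod_two :
    ∀ n : ℕ, (madanF n).map (Int.castRingHom (ZMod 2)) = X ^ (2 * n) + 1
  | 0 => by simp [madanF]; norm_num
  | 1 => by simpa [madanF] using map_X_sq_sub_four_mul_X_add_one
  | n + 2 => by
    rw [madanF, Polynomial.map_sub, Polynomial.map_mul, Polynomial.map_mul,
      map_X_sq_sub_four_mul_X_add_one, map_madanF_zmod_two (n + 1), map_madanF_zmod_two n]
    simp only [Polynomial.map_pow, Polynomial.map_X]
    ring

theorem map_gNum_zmod_two (n k : ℕ) :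
    (gNum n k).map (Int.castRingHom (ZMod 2)) = X ^ (2 * n) * (X + 1) ^ (2 * k) + 2 ^ k := by
  rw [pow_mul (X + 1 : (ZMod 2)[X]), CharTwo.add_sq, one_pow,
    ← Finset.sum_range_choose_smul_mul_pow_add_one, gNum, Polynomial.map_sum]
  refine Finset.sum_congr rfl fun j _ => ?_
  rw [natCast_zsmul, ← coe_mapRingHom, map_nsmul, coe_mapRingHom, map_madanF_zmod_two,
    ← pow_mul, ← pow_add, mul_add]

theorem stmt_12 : ∀ n k : ℕ, ∀ g : Polynomial ℤ,
    (X - 1) ^ k * g = gNum n k →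
    g.map (Int.castRingHom (ZMod 2)) =
      X ^ (2 * n) * (X + 1) ^ k + 2 ^ k := by
  intro n k g h
  have hne : ((X : (ZMod 2)[X]) + 1) ^ k ≠ 0 := pow_ne_zero k (X_add_C_ne_zero 1)
  refine mul_left_cancel₀ hne ?_
  calc (X + 1) ^ k * g.map (Int.castRingHom (ZMod 2))
      = ((X - 1) ^ k * g).map (Int.castRingHom (ZMod 2)) := by
        simp [CharTwo.sub_eq_add]
    _ = X ^ (2 * n) * (X + 1) ^ (2 * k) + 2 ^ k := by rw [h, map_gNum_zmod_two]
    _ = (X + 1) ^ k * (X ^ (2 * n) * (X + 1) ^ k + 2 ^ k) := by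
        rw [mul_add, CharTwo.pow_mul_two_pow]; ring
end

section
/- For all n, k ≥ 0, every coefficient of g_{n,k}(x) in degrees strictly less than 2n is divisible by 2^k; that is, g_{n,k}(x) ≡ 0 modulo the ideal (x^{2n}, 2^k) of Z[x]. -/
open Polynomial

/-!
Over `ℤ⟦X⟧` the quadratic `t² - (X² - 4X + 1) t + X²` has the roots `β = X² γ` and
`α = X² - 4X + 1 - β`, where `γ` is the power series with `X² γ² - (X² - 4X + 1) γ + 1 = 0`.
Hence `f n = αⁿ + βⁿ` and the numerator of `g_{n,k}` is `αⁿ (1 + α)ᵏ + βⁿ (1 + β)ᵏ`.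
Since `(1 + α)(1 + β) = 2 (X - 1)²` and `1 + β`, `X - 1` are units, dividing by `(X - 1)ᵏ`
gives `g = 2ᵏ A + X²ⁿ B` in `ℤ⟦X⟧`.
-/

section Recurrence

variable {R : Type*} [CommRing R] [Algebra ℤ R] {x a b : R}

theorem aeval_madanF_eq_pow_add_pow (hsum : a + b = x ^ 2 - 4 * x + 1) (hprod : a * b = x ^ 2)
    (n : ℕ) : aeval x (madanF n) = a ^ n + b ^ n := by
  induction n using Nat.twoStepInduction with
  | zero => rw [madanF, map_ofNat]; norm_num
  | one => simp [madanF, hsum, map_ofNat]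
  | more n ih₁ ih₂ =>
    simp only [madanF, map_sub, map_mul, map_add, map_pow, aeval_X, map_one, map_ofNat, ih₁, ih₂]
    linear_combination (-(a ^ (n + 1) + b ^ (n + 1))) * hsum + (a ^ n + b ^ n) * hprod

theorem aeval_gNum_eq (hsum : a + b = x ^ 2 - 4 * x + 1) (hprod : a * b = x ^ 2) (n k : ℕ) :
    aeval x (gNum n k) = a ^ n * (1 + a) ^ k + b ^ n * (1 + b) ^ k := by
  simp only [gNum, map_sum, map_zsmul, aeval_madanF_eq_pow_add_pow hsum hprod, add_comm (1 : R),
    add_pow, one_pow, mul_one, Finset.mul_sum, ← Finset.sum_add_distrib]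
  refine Finset.sum_congr rfl fun j _ => ?_
  rw [zsmul_eq_mul]
  push_cast
  ring

end Recurrence

open scoped PowerSeries

def madanGammaCoeff : ℕ → ℤ
  | 0 => 1
  | 1 => 4
  | n + 2 => 4 * madanGammaCoeff (n + 1) - madanGammaCoeff n +
      ∑ i : Fin (n + 1), madanGammaCoeff i * madanGammaCoeff (n - i)
decreasing_by all_goals omega

noncomputable def madanGamma : PowerSeries ℤ := PowerSeries.mk madanGammaCoeff

namespace PowerSeries

theorem dvd_coeff_C_mul_add_X_pow_mul {R : Type*} [CommSemiring R] (c : R) (A B : R⟦X⟧)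
    {m i : ℕ} (hi : i < m) : c ∣ coeff i (C c * A + X ^ m * B) := by
  rw [map_add, coeff_C_mul, coeff_X_pow_mul', if_neg (by omega), add_zero]
  exact dvd_mul_right _ _

theorem coe_eq_aeval_X (p : ℤ[X]) : (p : ℤ⟦X⟧) = Polynomial.aeval (X : ℤ⟦X⟧) p := by
  rw [aeval_def, ← eval₂_C_X_eq_coe, Subsingleton.elim (algebraMap ℤ _) C]

end PowerSeries

@[simp]
theorem coeff_madanGamma (n : ℕ) : PowerSeries.coeff n madanGamma = madanGammaCoeff n :=
  PowerSeries.coeff_mk n madanGammaCoeff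

theorem coeff_madanGamma_sq (n : ℕ) :
    PowerSeries.coeff n (madanGamma ^ 2) =
      ∑ i : Fin (n + 1), madanGammaCoeff i * madanGammaCoeff (n - i) := by
  rw [sq, PowerSeries.coeff_mul, Finset.Nat.sum_antidiagonal_eq_sum_range_succ_mk,
    ← Fin.sum_univ_eq_sum_range fun i =>
      PowerSeries.coeff i madanGamma * PowerSeries.coeff (n - i) madanGamma]
  simp

theorem madanGamma_quadratic :
    PowerSeries.X ^ 2 * madanGamma ^ 2 - (PowerSeries.X ^ 2 - 4 * PowerSeries.X + 1) * madanGamma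
      + 1 = 0 := by
  rw [show (4 : ℤ⟦X⟧) = PowerSeries.C 4 by simp]
  ext (_ | _ | n) <;>
    simp only [sq (PowerSeries.X : ℤ⟦X⟧), sub_mul, add_mul, mul_assoc, map_add, map_sub,
      PowerSeries.coeff_C_mul, PowerSeries.coeff_succ_X_mul, coeff_madanGamma_sq]
  · simp [madanGammaCoeff]
  · simp [madanGammaCoeff]
  · simp [madanGammaCoeff]
    ring

theorem coe_gNum_eq_X_sub_one_pow_mul (n k : ℕ) : ∃ A B : ℤ⟦X⟧,
    (gNum n k : ℤ⟦X⟧) =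
      (PowerSeries.X - 1) ^ k * (PowerSeries.C (2 ^ k) * A + PowerSeries.X ^ (2 * n) * B) := by
  set b : ℤ⟦X⟧ := PowerSeries.X ^ 2 * madanGamma
  set a : ℤ⟦X⟧ := PowerSeries.X ^ 2 - 4 * PowerSeries.X + 1 - b
  have hsum : a + b = PowerSeries.X ^ 2 - 4 * PowerSeries.X + 1 := sub_add_cancel _ _
  have hprod : a * b = PowerSeries.X ^ 2 := by
    linear_combination (-PowerSeries.X ^ 2 : ℤ⟦X⟧) * madanGamma_quadratic
  have hfactor : (1 + a) * (1 + b) = 2 * (PowerSeries.X - 1) ^ 2 := by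
    linear_combination hsum + hprod
  obtain ⟨u, hu⟩ : ∃ u, (1 + b) * u = 1 :=
    IsUnit.exists_right_inv (by simp [PowerSeries.isUnit_iff_constantCoeff, b])
  obtain ⟨v, hv⟩ : ∃ v, (PowerSeries.X - 1 : ℤ⟦X⟧) * v = 1 :=
    IsUnit.exists_right_inv (by simp [PowerSeries.isUnit_iff_constantCoeff])
  have h1a : 1 + a = 2 * (PowerSeries.X - 1) ^ 2 * u := by
    linear_combination (-(1 + a)) * hu + u * hfactor
  have hvk : (PowerSeries.X - 1 : ℤ⟦X⟧) ^ k * v ^ k = 1 := by rw [← mul_pow, hv, one_pow]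
  refine ⟨a ^ n * (PowerSeries.X - 1) ^ k * u ^ k, madanGamma ^ n * (1 + b) ^ k * v ^ k, ?_⟩
  rw [PowerSeries.coe_eq_aeval_X, aeval_gNum_eq hsum hprod, h1a, mul_pow, mul_pow, ← pow_mul,
    map_pow, map_ofNat]
  linear_combination (-(PowerSeries.X ^ (2 * n) * madanGamma ^ n * (1 + b) ^ k)) * hvk

theorem coe_eq_C_two_pow_mul_add_X_pow_mul {n k : ℕ} {g : ℤ[X]}
    (hg : (X - 1) ^ k * g = gNum n k) :
    ∃ A B : ℤ⟦X⟧, (g : ℤ⟦X⟧) = PowerSeries.C (2 ^ k) * A + PowerSeries.X ^ (2 * n) * B := by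
  obtain ⟨A, B, hAB⟩ := coe_gNum_eq_X_sub_one_pow_mul n k
  have hX : (PowerSeries.X - 1 : ℤ⟦X⟧) ≠ 0 := fun h => by
    simpa using congrArg PowerSeries.constantCoeff h
  refine ⟨A, B, mul_left_cancel₀ (pow_ne_zero k hX) ?_⟩
  rw [← hAB, ← hg, Polynomial.coe_mul, Polynomial.coe_pow, Polynomial.coe_sub, Polynomial.coe_X,
    Polynomial.coe_one]

theorem stmt_13 : ∀ n k : ℕ, ∀ g : Polynomial ℤ,
    (X - 1) ^ k * g = gNum n k →
    ∀ i : ℕ, i < 2 * n → (2 : ℤ) ^ k ∣ g.coeff i := by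
  intro n k g hg i hi
  obtain ⟨A, B, hAB⟩ := coe_eq_C_two_pow_mul_add_X_pow_mul hg
  rw [← Polynomial.coeff_coe, hAB]
  exact PowerSeries.dvd_coeff_C_mul_add_X_pow_mul _ A B hi
end

section
/- Let Q ∈ Z[z] be a monic polynomial with Q(2) odd, Q(z) ≡ (z-1)^{deg Q} (mod 2) coefficient-wise, and all complex roots in the open disc |z| < √2 (a 'compliant representation' of Q(2)). Then for any even c with |c| ≤ 14, if the quality q(Q) := min{|Q(z)| : |z| = √2} is at least 7, the polynomial R(z) = (z^4 - 1) Q(z) + c is a compliant representation of 15·Q(2) + c with quality at least 3·q(Q) - |c| ≥ 7. -/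
/-!
On `‖z‖ ≥ √2` we have `‖z⁴ - 1‖ ≥ ‖z‖⁴ - 1 ≥ 3`, and `‖Q z‖ ≥ q` there as well: pushing a point of
the circle radially outward increases its distance to every root of `Q`, all of which lie inside
the disc. Hence `‖R z‖ ≥ 3q - |c| ≥ 7 > 0` on `‖z‖ ≥ √2`, so the roots of `R` stay in the open
disc. The congruence mod 2 comes from `(z - 1)⁴ = z⁴ - 1` in characteristic 2, with `c` even.
-/

open Polynomial

namespace Polynomial

variable {R : Type*} [CommRing R] [Nontrivial R] {Q : R[X]} {n : ℕ}

theorem Monic.natDegree_X_pow_sub_one_mul (hQ : Q.Monic) (hn : 0 < n) :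
    ((X ^ n - 1) * Q).natDegree = n + Q.natDegree := by
  rw [Monic.natDegree_mul (leadingCoeff_X_pow_sub_one hn) hQ]
  simpa using natDegree_X_pow_sub_C (n := n) (r := (1 : R))

theorem Monic.X_pow_sub_one_mul_add_C (hQ : Q.Monic) (hn : 0 < n) (c : R) :
    ((X ^ n - 1) * Q + C c).Monic := by
  refine Monic.add_of_left (Monic.mul (leadingCoeff_X_pow_sub_one hn) hQ)
    (degree_C_le.trans_lt (natDegree_pos_iff_degree_pos.mp ?_))
  rw [hQ.natDegree_X_pow_sub_one_mul hn]
  omega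

end Polynomial

theorem CharTwo.sub_one_pow_four {R : Type*} [CommRing R] [CharP R 2] (x : R) :
    (x - 1) ^ 4 = x ^ 4 - 1 := by
  simpa using sub_pow_char_pow x 1 (p := 2) (n := 2)

theorem map_X_pow_four_sub_one_mul_add_C_zmod_two {Q : ℤ[X]}
    (hQ : Q.map (Int.castRingHom (ZMod 2)) = (X - 1) ^ Q.natDegree) {c : ℤ} (hc : Even c) :
    ((X ^ 4 - 1) * Q + C c).map (Int.castRingHom (ZMod 2)) = (X - 1) ^ (4 + Q.natDegree) := by
  have hc2 : Int.castRingHom (ZMod 2) c = 0 :=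
    (ZMod.intCast_zmod_eq_zero_iff_dvd c 2).2 hc.two_dvd
  rw [Polynomial.map_add, Polynomial.map_mul, Polynomial.map_sub, Polynomial.map_pow, map_X,
    Polynomial.map_one, hQ, map_C, hc2, C_0, add_zero, ← CharTwo.sub_one_pow_four, pow_add]

theorem norm_sub_le_norm_smul_sub {E : Type*} [NormedAddCommGroup E] [InnerProductSpace ℝ E]
    {u r : E} {a : ℝ} (ha : 1 ≤ a) (hr : ‖r‖ ≤ ‖u‖) : ‖u - r‖ ≤ ‖a • u - r‖ := by
  refine (sq_le_sq₀ (norm_nonneg _) (norm_nonneg _)).mp ?_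
  rw [norm_sub_sq_real, norm_sub_sq_real, norm_smul, real_inner_smul_left, Real.norm_eq_abs,
    abs_of_nonneg (by linarith)]
  have h_inner : inner ℝ u r ≤ ‖u‖ ^ 2 :=
    (real_inner_le_norm u r).trans (by nlinarith [norm_nonneg u])
  -- `‖a • u - r‖² - ‖u - r‖² = (a - 1) * ((a - 1) * ‖u‖² + 2 * (‖u‖² - ⟪u, r⟫))`
  nlinarith [mul_nonneg (sub_nonneg.2 ha) (sub_nonneg.2 h_inner),
    mul_nonneg (mul_self_nonneg (a - 1)) (sq_nonneg ‖u‖)]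

theorem Complex.norm_multiset_prod (s : Multiset ℂ) : ‖s.prod‖ = (s.map (‖·‖)).prod :=
  map_multiset_prod (normHom : ℂ →*₀ ℝ) s

namespace Polynomial

theorem norm_eval_le_norm_eval_real_mul {p : ℂ[X]} {u : ℂ} {a : ℝ} (ha : 1 ≤ a)
    (hroots : ∀ r ∈ p.roots, ‖r‖ ≤ ‖u‖) : ‖p.eval u‖ ≤ ‖p.eval (a * u)‖ := by
  have hsplit := IsAlgClosed.splits p
  rw [hsplit.eval_eq_prod_roots, hsplit.eval_eq_prod_roots, norm_mul, norm_mul,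
    Complex.norm_multiset_prod, Complex.norm_multiset_prod, Multiset.map_map, Multiset.map_map]
  gcongr ?_ * ?_
  refine Multiset.prod_map_le_prod_map₀ _ _ (fun _ _ ↦ norm_nonneg _) fun r hr ↦ ?_
  simpa [← Complex.real_smul] using norm_sub_le_norm_smul_sub ha (hroots r hr)

theorem le_norm_eval_of_forall_norm_eq {p : ℂ[X]} {ρ q : ℝ} (hρ : 0 < ρ)
    (hroots : ∀ r ∈ p.roots, ‖r‖ ≤ ρ) (hq : ∀ z : ℂ, ‖z‖ = ρ → q ≤ ‖p.eval z‖)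
    {z : ℂ} (hz : ρ ≤ ‖z‖) : q ≤ ‖p.eval z‖ := by
  have hz0 : 0 < ‖z‖ := hρ.trans_le hz
  set u : ℂ := ((ρ / ‖z‖ : ℝ) : ℂ) * z
  have hu : ‖u‖ = ρ := by
    rw [norm_mul, Complex.norm_real, Real.norm_of_nonneg (by positivity)]
    field_simp
  have hzu : ((‖z‖ / ρ : ℝ) : ℂ) * u = z := by
    rw [← mul_assoc, ← Complex.ofReal_mul]
    field_simp
    simp
  calc q ≤ ‖p.eval u‖ := hq u hu
    _ ≤ ‖p.eval z‖ := hzu ▸ norm_eval_le_norm_eval_real_mul ((one_le_div hρ).2 hz) (hu ▸ hroots)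

end Polynomial

theorem three_mul_sub_norm_le_norm_pow_four_sub_one_mul_add {z w c : ℂ} {q : ℝ}
    (hz : √2 ≤ ‖z‖) (hq : 0 ≤ q) (hw : q ≤ ‖w‖) : 3 * q - ‖c‖ ≤ ‖(z ^ 4 - 1) * w + c‖ := by
  have hz4 : 4 ≤ ‖z‖ ^ 4 := by
    calc (4 : ℝ) = √2 ^ 4 := by rw [show 4 = 2 * 2 from rfl, pow_mul]; norm_num
      _ ≤ ‖z‖ ^ 4 := by gcongr
  have h3 : 3 ≤ ‖z ^ 4 - 1‖ := by
    have := norm_sub_norm_le (z ^ 4) 1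
    rw [norm_pow, norm_one] at this
    linarith
  calc 3 * q - ‖c‖ ≤ ‖z ^ 4 - 1‖ * ‖w‖ - ‖c‖ := by gcongr
    _ = ‖(z ^ 4 - 1) * w + c - c‖ - ‖c‖ := by rw [add_sub_cancel_right, norm_mul]
    _ ≤ ‖(z ^ 4 - 1) * w + c‖ := by linarith [norm_sub_le ((z ^ 4 - 1) * w + c) c]

theorem stmt_18_general (Q : Polynomial ℤ) (hmonic : Q.Monic)
    (hmod2 : Q.map (Int.castRingHom (ZMod 2)) = (X - 1) ^ Q.natDegree)
    (hroots : ∀ z : ℂ, aeval z Q = 0 → ‖z‖ < Real.sqrt 2)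
    (q : ℝ) (hq7 : 7 ≤ q)
    (hq : ∀ z : ℂ, ‖z‖ = Real.sqrt 2 → q ≤ ‖aeval z Q‖)
    (c : ℤ) (hceven : Even c) (hcle : |c| ≤ 14)
    (R : Polynomial ℤ) (hR : R = (X ^ 4 - 1) * Q + C c) :
    R.Monic ∧ R.eval 2 = 15 * Q.eval 2 + c ∧
      R.map (Int.castRingHom (ZMod 2)) = (X - 1) ^ R.natDegree ∧
      (∀ z : ℂ, aeval z R = 0 → ‖z‖ < Real.sqrt 2) ∧
      (∀ z : ℂ, ‖z‖ = Real.sqrt 2 →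
        3 * q - (|c| : ℝ) ≤ ‖aeval z R‖) ∧
      (7 : ℝ) ≤ 3 * q - (|c| : ℝ) := by
  subst hR
  have hc : (|c| : ℝ) ≤ 14 := by exact_mod_cast hcle
  have hProots : ∀ r ∈ (Q.map (algebraMap ℤ ℂ)).roots, ‖r‖ ≤ √2 := fun r hr ↦
    (hroots r (eval_map_algebraMap Q r ▸ (mem_roots'.1 hr).2)).le
  have hlow (z : ℂ) (hz : √2 ≤ ‖z‖) :
      3 * q - (|c| : ℝ) ≤ ‖aeval z ((X ^ 4 - 1) * Q + C c)‖ := by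
    have hQz := (Q.map (algebraMap ℤ ℂ)).le_norm_eval_of_forall_norm_eq (by positivity) hProots
      (fun z hz ↦ eval_map_algebraMap Q z ▸ hq z hz) hz
    rw [eval_map_algebraMap] at hQz
    simpa [Complex.norm_intCast] using
      three_mul_sub_norm_le_norm_pow_four_sub_one_mul_add (c := c) hz (by linarith) hQz
  refine ⟨hmonic.X_pow_sub_one_mul_add_C four_pos c, by simp, ?_,
    fun z hz ↦ ?_, fun z hz ↦ hlow z hz.ge, by linarith⟩
  · rw [natDegree_add_C, hmonic.natDegree_X_pow_sub_one_mul four_pos]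
    exact map_X_pow_four_sub_one_mul_add_C_zmod_two hmod2 hceven
  · by_contra! h
    have := hlow z h
    rw [hz, norm_zero] at this
    linarith

theorem stmt_18 (Q : Polynomial ℤ) (hmonic : Q.Monic) (hodd : Odd (Q.eval 2))
    (hmod2 : Q.map (Int.castRingHom (ZMod 2)) = (X - 1) ^ Q.natDegree)
    (hroots : ∀ z : ℂ, aeval z Q = 0 → ‖z‖ < Real.sqrt 2)
    (q : ℝ) (hq7 : 7 ≤ q)
    (hq : ∀ z : ℂ, ‖z‖ = Real.sqrt 2 → q ≤ ‖aeval z Q‖)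
    (c : ℤ) (hceven : Even c) (hcle : |c| ≤ 14)
    (R : Polynomial ℤ) (hR : R = (X ^ 4 - 1) * Q + C c) :
    R.Monic ∧ R.eval 2 = 15 * Q.eval 2 + c ∧
      R.map (Int.castRingHom (ZMod 2)) = (X - 1) ^ R.natDegree ∧
      (∀ z : ℂ, aeval z R = 0 → ‖z‖ < Real.sqrt 2) ∧
      (∀ z : ℂ, ‖z‖ = Real.sqrt 2 →
        3 * q - (|c| : ℝ) ≤ ‖aeval z R‖) ∧
      (7 : ℝ) ≤ 3 * q - (|c| : ℝ) :=
  stmt_18_general Q hmonic hmod2 hroots q hq7 hq c hceven hcle R hR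
end
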